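/- Let σ > 0, let δ ∈ (0, 1), and let Δμ > 0. Let q₁, q₂ ∈ ℝ satisfy Φ(q₁) = 1 − δ/2 and Φ(q₂) = 1 − δ, and set the detection threshold η = σ·q₁. If the signal-to-noise ratio satisfies Δμ/σ ≥ q₁ + q₂, then the detection rule ‘declare a marker when |X − μ_in| > η’ has: (i) false positive rate exactly δ, i.e., the measure gaussianReal 0 σ² of the set {x : |x| > η} equals δ; and (ii) detection power at least 1 − δ, i.e., the measure gaussianReal Δμ σ² of the set {x : |x| > η} is at least 1 − δ. -/
import Mathlib

open MeasureTheory ProbabilityTheory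
open scoped NNReal

/-- The cumulative distribution function of the standard Gaussian. -/
noncomputable def Φ : ℝ → ℝ := fun x => cdf (gaussianReal 0 1) x

namespace AsympSep

noncomputable def N : Measure ℝ := gaussianReal 0 1

lemma N_map_neg : N.map (fun x => -x) = N := by
  have h := gaussianReal_map_const_mul (μ := 0) (v := 1) (-1)
  have he : (fun x : ℝ => -x) = ((-1 : ℝ) * ·) := by funext x; ring
  rw [N, he, h]
  congr 1
  · ring
  · ext; simp

lemma N_singleton (a : ℝ) : N {a} = 0 :=
  (gaussianReal_absolutelyContinuous 0 one_ne_zero) (measure_singleton a)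

instance : IsProbabilityMeasure N := inferInstanceAs (IsProbabilityMeasure (gaussianReal 0 1))

lemma N_union_singleton (s : Set ℝ) (a : ℝ) : N (s ∪ {a}) = N s :=
  le_antisymm ((measure_union_le _ _).trans (by rw [N_singleton, add_zero]))
    (measure_mono Set.subset_union_left)

lemma N_Iic (a : ℝ) : N (Set.Iic a) = ENNReal.ofReal (Φ a) :=
  (ofReal_cdf _ a).symm

lemma N_Ioi (a : ℝ) : N (Set.Ioi a) = ENNReal.ofReal (1 - Φ a) := by
  have h1 : N (Set.Ioi a) = 1 - N (Set.Iic a) := by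
    rw [← Set.compl_Iic]
    exact prob_compl_eq_one_sub measurableSet_Iic
  rw [h1, N_Iic, ← ENNReal.ofReal_one,
    ← ENNReal.ofReal_sub _ (show (0:ℝ) ≤ Φ a from cdf_nonneg _ a)]

lemma N_Ici (a : ℝ) : N (Set.Ici a) = ENNReal.ofReal (1 - Φ a) := by
  rw [← Set.Ioi_union_left, N_union_singleton, N_Ioi]

lemma Φ_neg (a : ℝ) : Φ (-a) = 1 - Φ a := by
  have hmap : N (Set.Iic (-a)) = N (Set.Ici a) := by
    conv_lhs => rw [← N_map_neg]
    rw [Measure.map_apply measurable_neg measurableSet_Iic]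
    congr 1
    ext x
    simp
  have := hmap
  rw [N_Iic, N_Ici] at this
  have h1 : (0:ℝ) ≤ Φ (-a) := cdf_nonneg _ _
  have h2 : (0:ℝ) ≤ 1 - Φ a := by have := cdf_le_one (gaussianReal 0 1) a; simp [Φ]; linarith
  exact (ENNReal.ofReal_eq_ofReal_iff h1 h2).mp this

lemma N_Iio (a : ℝ) : N (Set.Iio a) = ENNReal.ofReal (Φ a) := by
  have : Set.Iic a = Set.Iio a ∪ {a} := (Set.Iio_union_right).symm
  have h := N_Iic a
  rw [this, N_union_singleton] at h
  exact h

lemma Φ_zero : Φ 0 = 1 / 2 := by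
  have := Φ_neg 0
  rw [neg_zero] at this
  linarith

end AsympSep

open AsympSep in
/-- **Asymptotic separability.** With detection threshold `η = σ * q₁` where
`Φ q₁ = 1 - δ/2` and `Φ q₂ = 1 - δ`, if the signal-to-noise ratio satisfies
`Δμ / σ ≥ q₁ + q₂`, then the rule "declare a marker when `|X - μ_in| > η`" has
false positive rate exactly `δ` under the noise distribution `gaussianReal 0 σ²`
and detection power at least `1 - δ` under the marker distribution
`gaussianReal Δμ σ²`. -/
theorem asymptotic_separability
    (σ : ℝ≥0) (hσ : 0 < σ) (δ : ℝ) (hδ0 : 0 < δ) (hδ1 : δ < 1)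
    (Δμ : ℝ) (hΔμ : 0 < Δμ) (q₁ q₂ : ℝ)
    (hq₁ : Φ q₁ = 1 - δ / 2) (hq₂ : Φ q₂ = 1 - δ)
    (η : ℝ) (hη : η = (σ : ℝ) * q₁)
    (hsnr : Δμ / (σ : ℝ) ≥ q₁ + q₂) :
    gaussianReal 0 (σ ^ 2) {x | |x| > η} = ENNReal.ofReal δ ∧
      ENNReal.ofReal (1 - δ) ≤ gaussianReal Δμ (σ ^ 2) {x | |x| > η} := by
  have hσR : (0:ℝ) < (σ:ℝ) := hσ
  -- q₁ is nonnegative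
  have hq₁pos : 0 ≤ q₁ := by
    by_contra h
    push_neg at h
    have : Φ q₁ ≤ Φ 0 := monotone_cdf _ h.le
    rw [hq₁, Φ_zero] at this
    linarith
  -- the scaled measure
  have hmapσ : gaussianReal 0 (σ ^ 2) = N.map (((σ:ℝ)) * ·) := by
    rw [N, gaussianReal_map_const_mul]
    congr 1
    · ring
    · ext; push_cast; ring
  have hsetmeas : MeasurableSet {x : ℝ | |x| > η} := by
    have : {x : ℝ | |x| > η} = Set.Iio (-η) ∪ Set.Ioi η := by
      ext x
      simp only [Set.mem_setOf_eq, Set.mem_union, Set.mem_Iio, Set.mem_Ioi, lt_abs]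
      constructor
      · rintro (h | h)
        · right; exact h
        · left; linarith
      · rintro (h | h)
        · right; linarith
        · left; exact h
    rw [this]; exact measurableSet_Iio.union measurableSet_Ioi
  constructor
  · -- false positive rate
    rw [hmapσ, Measure.map_apply (measurable_const_mul _) hsetmeas]
    have hpre : (((σ:ℝ)) * ·) ⁻¹' {x : ℝ | |x| > η} = Set.Iio (-q₁) ∪ Set.Ioi q₁ := by
      ext x
      simp only [Set.mem_preimage, Set.mem_setOf_eq, Set.mem_union, Set.mem_Iio, Set.mem_Ioi,
        hη, abs_mul, abs_of_pos hσR]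
      rw [gt_iff_lt, mul_lt_mul_iff_right₀ hσR, lt_abs]
      constructor
      · rintro (h | h)
        · right; exact h
        · left; linarith
      · rintro (h | h)
        · right; linarith
        · left; exact h
    rw [hpre, measure_union (by
        intro s hs1 hs2 x hx
        have h1 := hs1 hx
        have h2 := hs2 hx
        simp only [Set.mem_Iio] at h1
        simp only [Set.mem_Ioi] at h2
        exact absurd rfl (by simp; linarith : x ∉ ({x} : Set ℝ)).elim ) measurableSet_Ioi]
    rw [N_Iio, N_Ioi, Φ_neg, hq₁, ← ENNReal.ofReal_add (by linarith) (by linarith)]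
    ring_nf
  · -- power
    have hmapΔ : gaussianReal Δμ (σ ^ 2) = N.map (fun x => (σ:ℝ) * x + Δμ) := by
      have h1 : gaussianReal Δμ (σ ^ 2) = (gaussianReal 0 (σ ^ 2)).map (· + Δμ) := by
        rw [gaussianReal_map_add_const, zero_add]
      rw [h1, hmapσ, Measure.map_map (measurable_add_const _) (measurable_const_mul _)]
      rfl
    have hsub : Set.Ioi η ⊆ {x : ℝ | |x| > η} := fun x hx =>
      lt_of_lt_of_le hx (le_abs_self x)
    calc ENNReal.ofReal (1 - δ)
        ≤ gaussianReal Δμ (σ ^ 2) (Set.Ioi η) := by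
          rw [hmapΔ, Measure.map_apply ((measurable_const_mul _).add_const _) measurableSet_Ioi]
          have hpre : (fun x => (σ:ℝ) * x + Δμ) ⁻¹' Set.Ioi η = Set.Ioi ((η - Δμ) / σ) := by
            ext x
            simp only [Set.mem_preimage, Set.mem_Ioi]
            rw [div_lt_iff₀ hσR]
            constructor <;> intro h <;> nlinarith
          rw [hpre, N_Ioi]
          apply ENNReal.ofReal_le_ofReal
          have ht : (η - Δμ) / σ ≤ -q₂ := by
            rw [hη]
            rw [ge_iff_le, le_div_iff₀ hσR] at hsnr
            rw [div_le_iff₀ hσR]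
            nlinarith
          have := monotone_cdf (gaussianReal 0 1) ht
          have hneg := Φ_neg q₂
          rw [hq₂] at hneg
          have : Φ ((η - Δμ) / σ) ≤ δ := by
            calc Φ ((η - Δμ) / σ) ≤ Φ (-q₂) := this
              _ = δ := by rw [hneg]; ring
          linarith
      _ ≤ gaussianReal Δμ (σ ^ 2) {x | |x| > η} := measure_mono hsub
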